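/- Let F be a field, let n be a nonnegative integer, and let Q, C, Z ∈ F with (Q;Q)_n ≠ 0 and (C;Q)_n ≠ 0. Then Σ_{k=0}^{n} ( (Q^{-n};Q)_k · (-1)^k · Q^{k(k-1)/2} / ( (Q;Q)_k (C;Q)_k ) ) · Z^k = (1/(C;Q)_n) · Σ_{k=0}^{n} ( (Q^{-n};Q)_k · (Z Q^{-n}/C; Q)_k / (Q;Q)_k ) · Q^k · (C Q^{n-1})^k. (Here Q is assumed invertible, and C invertible, so that Q^{-n} and the ratios make sense.) -/

import Mathlib

/-!
Expand `(z q⁻ⁿ / c; q)_j` by Cauchy's q-binomial theorem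
`(x; q)_N = ∑ₘ [N, m]_q (-1)ᵐ q^(m(m-1)/2) xᵐ` and interchange the two sums. For fixed `k`,
after `(q⁻ⁿ; q)_{k+i} = (q⁻ⁿ; q)_k (q^(k-n); q)_i`, the inner sum over `j = k + i` is an
instance of the terminating form `∑ₘ (q^(-N); q)ₘ / (q; q)ₘ (x q^N)ᵐ = (x; q)_N` of the same
theorem, and equals `(c qᵏ; q)_{n-k} = (c; q)_n / (c; q)_k`.
-/

/-- The q-Pochhammer symbol `(a; Q)_n = ∏_{j=0}^{n-1} (1 - a Q^j)` in a field. -/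
def qPoch {F : Type*} [Field F] (a Q : F) (n : ℕ) : F := ∏ j ∈ Finset.range n, (1 - a * Q ^ j)

open Finset

section
variable {F : Type*} [Field F]

@[simp]
lemma qPoch_zero (a q : F) : qPoch a q 0 = 1 := rfl

lemma qPoch_succ (a q : F) (n : ℕ) : qPoch a q (n + 1) = qPoch a q n * (1 - a * q ^ n) :=
  prod_range_succ _ _

lemma qPoch_add (a q : F) (k m : ℕ) :
    qPoch a q (k + m) = qPoch a q k * qPoch (a * q ^ k) q m := by
  simp only [qPoch, prod_range_add, pow_add, mul_assoc]

lemma qPoch_ne_zero_of_le {a q : F} {k n : ℕ} (h : k ≤ n) (hn : qPoch a q n ≠ 0) :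
    qPoch a q k ≠ 0 := by
  obtain ⟨m, rfl⟩ := Nat.exists_eq_add_of_le h
  exact left_ne_zero_of_mul (qPoch_add a q k m ▸ hn)

lemma qPoch_mul_pow_sub {a q : F} {k n : ℕ} (h : k ≤ n) (hk : qPoch a q k ≠ 0) :
    qPoch (a * q ^ k) q (n - k) = qPoch a q n / qPoch a q k := by
  rw [eq_div_iff hk, mul_comm, ← qPoch_add, Nat.add_sub_cancel' h]

def qBinom (q : F) : ℕ → ℕ → F
  | _, 0 => 1
  | 0, _ + 1 => 0
  | N + 1, m + 1 => qBinom q N (m + 1) + q ^ (N - m) * qBinom q N m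

@[simp]
lemma qBinom_zero_right (q : F) (N : ℕ) : qBinom q N 0 = 1 := by cases N <;> rfl

lemma qBinom_succ_succ (q : F) (N m : ℕ) :
    qBinom q (N + 1) (m + 1) = qBinom q N (m + 1) + q ^ (N - m) * qBinom q N m := rfl

lemma qBinom_eq_zero_of_lt (q : F) : ∀ {N m : ℕ}, N < m → qBinom q N m = 0
  | 0, _ + 1, _ => rfl
  | N + 1, m + 1, h => by
    rw [qBinom_succ_succ, qBinom_eq_zero_of_lt q (by omega), qBinom_eq_zero_of_lt q (by omega),
      mul_zero, add_zero]

@[simp]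
lemma qBinom_self (q : F) : ∀ N : ℕ, qBinom q N N = 1
  | 0 => rfl
  | N + 1 => by
    rw [qBinom_succ_succ, qBinom_eq_zero_of_lt q N.lt_succ_self, qBinom_self q N, Nat.sub_self]
    ring

lemma qBinom_add_mul_qPoch_mul_qPoch (q : F) (a b : ℕ) :
    qBinom q (a + b) a * qPoch q q a * qPoch q q b = qPoch q q (a + b) := by
  induction a generalizing b with
  | zero => simp
  | succ a iha =>
    induction b with
    | zero => simp
    | succ b ihb =>
      have hab := iha (b + 1)
      rw [show a + 1 + b = a + b + 1 by omega, qPoch_succ q q a] at ihb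
      rw [show a + (b + 1) = a + b + 1 by omega, qPoch_succ q q b] at hab
      rw [show a + 1 + (b + 1) = a + b + 1 + 1 by omega, qBinom_succ_succ,
        show a + b + 1 - a = b + 1 by omega, qPoch_succ q q (a + b + 1), qPoch_succ q q a,
        qPoch_succ q q b]
      linear_combination (1 - q * q ^ b) * ihb + q ^ (b + 1) * (1 - q * q ^ a) * hab

lemma qBinom_eq_div {q : F} {N m : ℕ} (hm : m ≤ N) (hN : qPoch q q N ≠ 0) :
    qBinom q N m = qPoch q q N / (qPoch q q m * qPoch q q (N - m)) := by
  obtain ⟨b, rfl⟩ := Nat.exists_eq_add_of_le hm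
  rw [Nat.add_sub_cancel_left, eq_div_iff, ← mul_assoc, qBinom_add_mul_qPoch_mul_qPoch]
  exact mul_ne_zero (qPoch_ne_zero_of_le hm hN) (qPoch_ne_zero_of_le (by omega) hN)

theorem qPoch_eq_sum_qBinom (q x : F) (N : ℕ) :
    qPoch x q N =
      ∑ m ∈ range (N + 1), qBinom q N m * (-1) ^ m * q ^ (m * (m - 1) / 2) * x ^ m := by
  induction N with
  | zero => simp
  | succ N ih =>
    have h_upper : ∑ m ∈ range (N + 1),
        qBinom q N (m + 1) * (-1) ^ (m + 1) * q ^ (m * (m - 1) / 2 + m) * x ^ (m + 1)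
          + 1 = qPoch x q N := by
      rw [ih, sum_range_succ, qBinom_eq_zero_of_lt q N.lt_succ_self, sum_range_succ' _ N]
      simp only [Nat.triangle_succ]
      simp
    have h_lower : ∑ m ∈ range (N + 1),
        q ^ (N - m) * qBinom q N m * (-1) ^ (m + 1) * q ^ (m * (m - 1) / 2 + m) * x ^ (m + 1)
          = -(x * q ^ N) * qPoch x q N := by
      rw [ih, mul_sum]
      refine sum_congr rfl fun m hm => ?_
      have hpow : q ^ (N - m) * q ^ (m * (m - 1) / 2 + m) = q ^ N * q ^ (m * (m - 1) / 2) := by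
        rw [← pow_add, ← pow_add]
        congr 1
        have := mem_range.mp hm
        omega
      linear_combination (-1) ^ (m + 1) * qBinom q N m * x ^ (m + 1) * hpow
    rw [sum_range_succ', qPoch_succ]
    simp only [Nat.triangle_succ]
    simp only [qBinom_succ_succ, add_mul, sum_add_distrib, qBinom_zero_right, zero_mul,
      Nat.zero_div, pow_zero, mul_one]
    linear_combination -h_upper - h_lower

lemma qPoch_mul_pow_mul_qPoch_sub {a q : F} {N : ℕ} (ha : a * q ^ N = 1) :
    ∀ m ≤ N, qPoch a q m * q ^ (N * m) * qPoch q q (N - m)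
      = (-1) ^ m * q ^ (m * (m - 1) / 2) * qPoch q q N
  | 0, _ => by simp
  | m + 1, hm => by
    have ih := qPoch_mul_pow_mul_qPoch_sub ha m (by omega)
    have hsplit : qPoch q q (N - m) = qPoch q q (N - (m + 1)) * (1 - q * q ^ (N - (m + 1))) := by
      rw [← qPoch_succ]; congr 1; omega
    have hpow : q ^ m * (q * q ^ (N - (m + 1))) = q ^ N := by
      rw [← pow_succ', ← pow_add]; congr 1; omega
    rw [hsplit] at ih
    rw [qPoch_succ, Nat.triangle_succ]
    -- `(1 - a qᵐ) qᴺ = -qᵐ (1 - q^(N-m))` because `a qᴺ = 1`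
    linear_combination (-q ^ m) * ih
      - qPoch a q m * q ^ (N * m) * qPoch q q (N - (m + 1)) * q ^ m * ha
      - qPoch a q m * q ^ (N * m) * qPoch q q (N - (m + 1)) * hpow

theorem sum_qPoch_div_qPoch_mul_pow {a q : F} (x : F) {N : ℕ} (ha : a * q ^ N = 1)
    (hN : qPoch q q N ≠ 0) :
    ∑ m ∈ range (N + 1), qPoch a q m / qPoch q q m * (x * q ^ N) ^ m = qPoch x q N := by
  rw [qPoch_eq_sum_qBinom]
  refine sum_congr rfl fun m hm => ?_
  have hmN : m ≤ N := Nat.lt_succ_iff.mp (mem_range.mp hm)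
  have hm0 : qPoch q q m ≠ 0 := qPoch_ne_zero_of_le hmN hN
  have hNm : qPoch q q (N - m) ≠ 0 := qPoch_ne_zero_of_le (N.sub_le m) hN
  rw [qBinom_eq_div hmN hN, mul_pow, ← pow_mul]
  field_simp
  linear_combination x ^ m * qPoch_mul_pow_mul_qPoch_sub ha m hmN

lemma sum_qPoch_mul_qBinom_div_qPoch {a q : F} (c : F) {n k : ℕ} (ha : a * q ^ n = 1)
    (hn : qPoch q q n ≠ 0) (hk : k ≤ n) :
    ∑ j ∈ range (n + 1), qPoch a q j * qBinom q j k / qPoch q q j * (c * q ^ n) ^ j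
      = qPoch a q k / qPoch q q k * (c * q ^ n) ^ k * qPoch (c * q ^ k) q (n - k) := by
  have hpow : q ^ k * q ^ (n - k) = q ^ n := by rw [← pow_add, Nat.add_sub_cancel' hk]
  have ha' : a * q ^ k * q ^ (n - k) = 1 := by rw [mul_assoc, hpow, ha]
  rw [← sum_qPoch_div_qPoch_mul_pow (c * q ^ k) ha' (qPoch_ne_zero_of_le (n.sub_le k) hn),
    mul_sum, show n + 1 = k + (n - k + 1) by omega, sum_range_add,
    sum_eq_zero fun j hj => by rw [qBinom_eq_zero_of_lt q (mem_range.mp hj)]; ring, zero_add]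
  refine sum_congr rfl fun i hi => ?_
  have hki : k + i ≤ n := by have := mem_range.mp hi; omega
  have hk0 : qPoch q q k ≠ 0 := qPoch_ne_zero_of_le hk hn
  have hi0 : qPoch q q i ≠ 0 := qPoch_ne_zero_of_le (by omega) hn
  have hki0 : qPoch q q (k + i) ≠ 0 := qPoch_ne_zero_of_le hki hn
  rw [qPoch_add, qBinom_eq_div (k.le_add_right i) hki0,
    Nat.add_sub_cancel_left, mul_assoc c, hpow, pow_add]
  field_simp

theorem sum_qPoch_mul_qPoch_div_qPoch_mul_pow {a q : F} (c y : F) {n : ℕ} (ha : a * q ^ n = 1)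
    (hn : qPoch q q n ≠ 0) :
    ∑ j ∈ range (n + 1), qPoch a q j * qPoch y q j / qPoch q q j * (c * q ^ n) ^ j
      = ∑ k ∈ range (n + 1), qPoch a q k * (-1) ^ k * q ^ (k * (k - 1) / 2) / qPoch q q k
          * (y * (c * q ^ n)) ^ k * qPoch (c * q ^ k) q (n - k) := by
  calc _ = ∑ j ∈ range (n + 1), ∑ k ∈ range (n + 1),
        (-1) ^ k * q ^ (k * (k - 1) / 2) * y ^ k
          * (qPoch a q j * qBinom q j k / qPoch q q j * (c * q ^ n) ^ j) := by
        refine sum_congr rfl fun j hj => ?_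
        have hjn : j + 1 ≤ n + 1 := mem_range.mp hj
        rw [qPoch_eq_sum_qBinom q y j, sum_subset (range_subset_range.2 hjn) fun k _ hk => by
            rw [qBinom_eq_zero_of_lt q (by simp at hk; omega)]; ring, mul_sum, sum_div, sum_mul]
        exact sum_congr rfl fun k _ => by ring
    _ = _ := by
        rw [sum_comm]
        refine sum_congr rfl fun k hk => ?_
        rw [← mul_sum,
          sum_qPoch_mul_qBinom_div_qPoch c ha hn (Nat.lt_succ_iff.mp (mem_range.mp hk))]
        ring

end

/-- The `B → ∞` limiting case of the transformation formula for a terminating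
`₂φ₁` basic hypergeometric series. -/
theorem limit_terminating_two_phi_one_transformation {F : Type*} [Field F] (n : ℕ)
    (Q C Z : F) (hQ : Q ≠ 0) (hC : C ≠ 0)
    (hQn : qPoch Q Q n ≠ 0) (hCn : qPoch C Q n ≠ 0) :
    ∑ k ∈ Finset.range (n + 1),
      qPoch (Q ^ (-(n : ℤ))) Q k * (-1) ^ k * Q ^ (k * (k - 1) / 2)
        / (qPoch Q Q k * qPoch C Q k) * Z ^ k
    = (qPoch C Q n)⁻¹ *
      ∑ k ∈ Finset.range (n + 1),
        qPoch (Q ^ (-(n : ℤ))) Q k * qPoch (Z * Q ^ (-(n : ℤ)) / C) Q k / qPoch Q Q k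
          * Q ^ k * (C * Q ^ ((n : ℤ) - 1)) ^ k := by
  have hQinv : Q ^ (-(n : ℤ)) * Q ^ n = 1 := by
    rw [zpow_neg, zpow_natCast, inv_mul_cancel₀ (pow_ne_zero n hQ)]
  have hshift (k : ℕ) : Q ^ k * (C * Q ^ ((n : ℤ) - 1)) ^ k = (C * Q ^ n) ^ k := by
    rw [← mul_pow, zpow_sub_one₀ hQ, zpow_natCast]
    field_simp
  have hZ : Z * Q ^ (-(n : ℤ)) / C * (C * Q ^ n) = Z := by
    rw [div_mul_eq_mul_div, mul_left_comm, mul_div_cancel_left₀ _ hC, mul_assoc, hQinv, mul_one]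
  simp_rw [mul_assoc (_ / qPoch Q Q _), hshift]
  rw [sum_qPoch_mul_qPoch_div_qPoch_mul_pow C _ hQinv hQn, hZ, mul_sum]
  refine sum_congr rfl fun k hk => ?_
  have hkn : k ≤ n := Nat.lt_succ_iff.mp (mem_range.mp hk)
  have hCk : qPoch C Q k ≠ 0 := qPoch_ne_zero_of_le hkn hCn
  rw [qPoch_mul_pow_sub hkn hCk]
  field_simp
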